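/- Let c be an exclusive cycle in E, v ∈ c⁰, H = E⁰ − R(c⁰). For every vertex w ∈ B_H and every basis element pq* ∈ X of the module N_c^v, the element w^H = w − Σ_{f ∈ s⁻¹(w) ∩ r⁻¹(E⁰−H)} f f* of L_K(E) annihilates pq*, i.e., w^H · pq* = 0. -/

import Mathlib

/-- A directed graph with vertex set `V`, edge set `E`, source map `s` and range map `r`. -/
structure DiGraph where
  V : Type
  E : Type
  s : E → V
  r : E → V

namespace DiGraph

variable (G : DiGraph)

/-- There is an edge from `u` to `w`. -/
def Step (u w : G.V) : Prop := ∃ e : G.E, G.s e = u ∧ G.r e = w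

/-- `G.Reach u w` means `u ≥ w`: there is a (possibly trivial) directed path from `u` to `w`. -/
def Reach (u w : G.V) : Prop := Relation.ReflTransGen G.Step u w

/-- The root `R(W)` of a set of vertices `W`. -/
def root (W : Set G.V) : Set G.V := {u | ∃ w ∈ W, G.Reach u w}

/-- A set `H` of vertices is hereditary if `u ∈ H` and `u ≥ w` imply `w ∈ H`. -/
def Hereditary (H : Set G.V) : Prop := ∀ u ∈ H, ∀ w, G.Reach u w → w ∈ H

/-- A vertex is regular if it emits at least one and only finitely many edges. -/
def Regular (v : G.V) : Prop := (G.s ⁻¹' {v}).Nonempty ∧ (G.s ⁻¹' {v}).Finite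

/-- A set `H` is saturated if every regular vertex all of whose out-edges
have ranges in `H` lies in `H`. -/
def Saturated (H : Set G.V) : Prop :=
  ∀ v, G.Regular v → (∀ e, G.s e = v → G.r e ∈ H) → v ∈ H

/-- A set of vertices is downwards directed if every two of its elements have a
common lower bound in it. -/
def DownDirected (W : Set G.V) : Prop :=
  ∀ u ∈ W, ∀ v ∈ W, ∃ w ∈ W, G.Reach u w ∧ G.Reach v w

/-- The Countable Separation Property of a set of vertices. -/
def CSP (W : Set G.V) : Prop := ∃ C : Set G.V, C.Countable ∧ W ⊆ G.root C

/-- The Inner Countable Separation Property of a set of vertices. -/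
def ICSP (W : Set G.V) : Prop := ∃ C : Set G.V, C.Countable ∧ C ⊆ W ∧ W ⊆ G.root C

/-- `G.IsPathFrom v l` : the list of edges `l` forms a directed path starting at `v`. -/
def IsPathFrom : (G : DiGraph) → G.V → List G.E → Prop
  | _, _, [] => True
  | G, v, e :: es => G.s e = v ∧ G.IsPathFrom (G.r e) es

/-- The end (range) vertex of a path `l` starting at `v`. -/
def pathEnd : (G : DiGraph) → G.V → List G.E → G.V
  | _, v, [] => v
  | G, _, e :: es => G.pathEnd (G.r e) es

/-- The set of vertices on a path `l` starting at `v`. -/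
def pathVerts (v : G.V) (l : List G.E) : Set G.V := insert v {w | ∃ e ∈ l, G.r e = w}

/-- A cycle based at `v` : a nonempty closed path in which distinct edges have
distinct sources. -/
def IsCycle (v : G.V) (l : List G.E) : Prop :=
  l ≠ [] ∧ G.IsPathFrom v l ∧ G.pathEnd v l = v ∧ (l.map G.s).Nodup

/-- A cycle is exclusive if no vertex on it is the base of a cycle distinct from it
(cycles being identified with their sets of edges). -/
def ExclusiveCycle (v : G.V) (l : List G.E) : Prop :=
  G.IsCycle v l ∧ ∀ u ∈ G.pathVerts v l, ∀ m, G.IsCycle u m → (∀ e, e ∈ m ↔ e ∈ l)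

open Classical in
/-- Auxiliary reduction on reversed edge lists: cancel common initial segments. -/
noncomputable def redAux (G : DiGraph) : List G.E → List G.E → List G.E × List G.E
  | a :: as, b :: bs => if a = b then redAux G as bs else (a :: as, b :: bs)
  | as, bs => (as, bs)

/-- The reduction function: `red (p, q)` cancels the common final edges of the
paths `p` and `q`, implementing `red(ee*q*) = q*` and `red(pee*q*) = red(pq*)`. -/
noncomputable def red (p q : List G.E) : List G.E × List G.E :=
  ((G.redAux p.reverse q.reverse).1.reverse, (G.redAux p.reverse q.reverse).2.reverse)

/-- The source vertex of an element `pq*` (with `q` a path starting at the base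
vertex `v`): the source of `p` if `p` is nonempty, and `r(q)` otherwise. -/
def startVtx (v : G.V) : List G.E × List G.E → G.V
  | ([], q) => G.pathEnd v q
  | (e :: _, _) => G.s e

/-- Membership in the set `Y` associated to a cycle `c` (based at `cv`, with edges
`cl`) and a vertex `v ∈ c⁰`: pairs `(p, q)` of paths with `r(p) = r(q) ∈ c⁰` and
`s(q) = v`. -/
def MemY (cv : G.V) (cl : List G.E) (v : G.V) (x : List G.E × List G.E) : Prop :=
  G.IsPathFrom (G.startVtx v x) x.1 ∧ G.IsPathFrom v x.2 ∧
    G.pathEnd (G.startVtx v x) x.1 = G.pathEnd v x.2 ∧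
    G.pathEnd v x.2 ∈ G.pathVerts cv cl

/-- The degree `|p| − |q|` of an element `pq*`. -/
def degOf (G : DiGraph) (x : List G.E × List G.E) : ℤ :=
  (x.1.length : ℤ) - (x.2.length : ℤ)

/-- The branching system `X`: reduced elements of `Y`. -/
def Xset (cv : G.V) (cl : List G.E) (v : G.V) : Set (List G.E × List G.E) :=
  {x | G.MemY cv cl v x ∧ G.red x.1 x.2 = x}

/-- The subset `X_w` of `X` of elements with source vertex `w`. -/
def Xvtx (cv : G.V) (cl : List G.E) (v : G.V) (w : G.V) : Set (List G.E × List G.E) :=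
  {x ∈ G.Xset cv cl v | G.startVtx v x = w}

/-- The subset `X_e` of `X` of elements of the form `red(e r s*)` with `e r s* ∈ Y`. -/
def Xedge (cv : G.V) (cl : List G.E) (v : G.V) (e : G.E) : Set (List G.E × List G.E) :=
  {x | ∃ rs : List G.E × List G.E, G.MemY cv cl v (e :: rs.1, rs.2) ∧
    x = G.red (e :: rs.1) rs.2}

/-- The map `σ_e : X_{r(e)} → X_e`, `pq* ↦ red(e p q*)`. -/
noncomputable def sigmaE (e : G.E) (x : List G.E × List G.E) : List G.E × List G.E :=
  G.red (e :: x.1) x.2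

end DiGraph

noncomputable section
open Classical

variable (K : Type) [Field K] (G : DiGraph)

/-- Generators of the Leavitt path algebra: vertices, edges and ghost edges. -/
abbrev LVGen (G : DiGraph) : Type := G.V ⊕ G.E ⊕ G.E

/-- The free algebra on the generators. -/
abbrev LFree : Type := FreeAlgebra K (LVGen G)

/-- Vertex generator. -/
def fv (v : G.V) : LFree K G := FreeAlgebra.ι K (Sum.inl v)
/-- Edge generator. -/
def fe (e : G.E) : LFree K G := FreeAlgebra.ι K (Sum.inr (Sum.inl e))
/-- Ghost edge generator. -/
def fg (e : G.E) : LFree K G := FreeAlgebra.ι K (Sum.inr (Sum.inr e))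

/-- The defining relations of the Leavitt path algebra: the path algebra relations
(V), (E) together with (CK1) and (CK2). -/
inductive LRel : LFree K G → LFree K G → Prop
  | vv : ∀ {v w : G.V}, v ≠ w → LRel (fv K G v * fv K G w) 0
  | v_idem : ∀ v : G.V, LRel (fv K G v * fv K G v) (fv K G v)
  | se : ∀ e : G.E, LRel (fv K G (G.s e) * fe K G e) (fe K G e)
  | er : ∀ e : G.E, LRel (fe K G e * fv K G (G.r e)) (fe K G e)
  | rg : ∀ e : G.E, LRel (fv K G (G.r e) * fg K G e) (fg K G e)
  | gs : ∀ e : G.E, LRel (fg K G e * fv K G (G.s e)) (fg K G e)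
  | ck1 : ∀ {e f : G.E}, e ≠ f → LRel (fg K G e * fe K G f) 0
  | ck1e : ∀ e : G.E, LRel (fg K G e * fe K G e) (fv K G (G.r e))
  | ck2 : ∀ (v : G.V) (h : (G.s ⁻¹' {v}).Finite), (G.s ⁻¹' {v}).Nonempty →
      LRel (fv K G v) (∑ e ∈ h.toFinset, fe K G e * fg K G e)

/-- The Leavitt path algebra `L_K(E)` of `G` over `K`. -/
abbrev LPA : Type := RingQuot (LRel K G)

/-- The image of a vertex in `L_K(E)`. -/
def lv (v : G.V) : LPA K G := RingQuot.mkAlgHom K (LRel K G) (fv K G v)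
/-- The image of an edge in `L_K(E)`. -/
def le (e : G.E) : LPA K G := RingQuot.mkAlgHom K (LRel K G) (fe K G e)
/-- The image of a ghost edge in `L_K(E)`. -/
def lg (e : G.E) : LPA K G := RingQuot.mkAlgHom K (LRel K G) (fg K G e)

/-- The element of `L_K(E)` associated to a path `p` (a list of edges). -/
def pProd (p : List G.E) : LPA K G := (p.map (le K G)).prod
/-- The element `q*` of `L_K(E)` associated to a path `q`. -/
def gProd (q : List G.E) : LPA K G := (q.reverse.map (lg K G)).prod

/-- The set of monomials `pq*` of degree `n` in `L_K(E)`. -/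
def MonSet (n : ℤ) : Set (LPA K G) :=
  {x | ∃ (u w : G.V) (p q : List G.E), G.IsPathFrom u p ∧ G.IsPathFrom w q ∧
    G.pathEnd u p = G.pathEnd w q ∧ (p.length : ℤ) - (q.length : ℤ) = n ∧
    x = lv K G u * pProd K G p * gProd K G q}

/-- The degree-`n` homogeneous component of `L_K(E)`: the `K`-linear span of the
monomials `pq*` with `|p| − |q| = n`. -/
def lpaComp (n : ℤ) : Submodule K (LPA K G) := Submodule.span K (MonSet K G n)

/-- A homogeneous element of `L_K(E)`. -/
def LHomog (x : LPA K G) : Prop := ∃ n : ℤ, x ∈ lpaComp K G n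

/-- The free `K`-module on the set of pairs `(p, q)`; the module `N_c = M(X)` is
the span of the basis elements indexed by `X`. -/
abbrev MFree : Type := (List G.E × List G.E) →₀ K

/-- The action of a vertex `w` on a basis element `pq*`:
`w · pq* = pq*` if `s(p) = w`, else `0`. -/
def vAct (v w : G.V) (x : List G.E × List G.E) : MFree K G :=
  if G.startVtx v x = w then Finsupp.single x 1 else 0

/-- The action of an edge `f` on a basis element `pq*`:
`f · pq* = red(f p q*)` if `s(p) = r(f)`, else `0`. -/
def eAct (v : G.V) (f : G.E) (x : List G.E × List G.E) : MFree K G :=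
  if G.startVtx v x = G.r f then Finsupp.single (G.red (f :: x.1) x.2) 1 else 0

/-- The action of a ghost edge `f*` on a basis element `pq*`:
`f* · pq* = σ_f⁻¹(pq*)` if `pq* ∈ X_f`, else `0`. -/
def gAct (v : G.V) (cl : List G.E) (f : G.E) (x : List G.E × List G.E) : MFree K G :=
  match x with
  | (e :: t, q) => if e = f then Finsupp.single (t, q) 1 else 0
  | ([], q) => if f ∈ cl ∧ G.s f = G.pathEnd v q then Finsupp.single ([], q ++ [f]) 1
      else 0

/-- Linear extension of an action on basis elements to the whole module. -/
def actM (F : List G.E × List G.E → MFree K G) (m : MFree K G) : MFree K G :=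
  m.sum fun x k => k • F x

/-- The action of `p* = eₙ* ⋯ e₁*` for a path `p = e₁ ⋯ eₙ`, applying `e₁*` first:
`(ep)* · x = p* · (e* · x)`. -/
def gPathAct (v : G.V) (cl : List G.E) : List G.E → MFree K G → MFree K G
  | [], m => m
  | e :: t, m => gPathAct v cl t (actM K G (gAct K G v cl e) m)

/-! If `p = e t` is nonempty, `f f*` fixes the reduced `p q*` for `f = e` and kills it otherwise,
so the sum picks out `e`, which is an index exactly when `s(e) = w`: its range reaches `c⁰`
along `t`. If `p` is trivial, `f*` acts nontrivially on `q*` only for the unique cycle edge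
leaving `r(q)`, and `f f*` then fixes `q*`; that edge is an index exactly when `r(q) = w`. -/

namespace DiGraph

variable {G}

@[simp] lemma isPathFrom_cons (v : G.V) (e : G.E) (t : List G.E) :
    G.IsPathFrom v (e :: t) ↔ G.s e = v ∧ G.IsPathFrom (G.r e) t := by
  rw [IsPathFrom]

@[simp] lemma pathEnd_nil (v : G.V) : G.pathEnd v [] = v := by
  rw [pathEnd]

@[simp] lemma pathEnd_cons (v : G.V) (e : G.E) (t : List G.E) :
    G.pathEnd v (e :: t) = G.pathEnd (G.r e) t := by
  rw [pathEnd]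

@[simp] lemma startVtx_nil (v : G.V) (q : List G.E) :
    G.startVtx v ([], q) = G.pathEnd v q := by
  rw [startVtx]

@[simp] lemma startVtx_cons (v : G.V) (e : G.E) (t q : List G.E) :
    G.startVtx v (e :: t, q) = G.s e := by
  rw [startVtx]

lemma pathEnd_append (v : G.V) (p q : List G.E) :
    G.pathEnd v (p ++ q) = G.pathEnd (G.pathEnd v p) q := by
  induction p generalizing v with
  | nil => simp
  | cons e t ih => simp [ih]

lemma reach_pathEnd {u : G.V} {p : List G.E} (hp : G.IsPathFrom u p) :
    G.Reach u (G.pathEnd u p) := by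
  induction p generalizing u with
  | nil => rw [pathEnd_nil]; exact Relation.ReflTransGen.refl
  | cons e t ih =>
    rw [isPathFrom_cons] at hp
    rw [pathEnd_cons]
    exact Relation.ReflTransGen.head ⟨e, hp.1, rfl⟩ (ih hp.2)

lemma subset_root (W : Set G.V) : W ⊆ G.root W :=
  fun u hu => ⟨u, hu, Relation.ReflTransGen.refl⟩

lemma mem_root_of_reach {W : Set G.V} {u u' : G.V} (h : G.Reach u u') (hu' : u' ∈ G.root W) :
    u ∈ G.root W :=
  let ⟨w, hw, hreach⟩ := hu'
  ⟨w, hw, h.trans hreach⟩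

lemma startVtx_eq_of_isPathFrom {u v : G.V} {p q : List G.E} (hp : G.IsPathFrom u p)
    (hend : G.pathEnd u p = G.pathEnd v q) : G.startVtx v (p, q) = u := by
  cases p with
  | nil => simpa using hend.symm
  | cons e t => simpa using ((isPathFrom_cons _ _ _).mp hp).1

lemma red_singleton_append_self (f : G.E) (q : List G.E) :
    G.red [f] (q ++ [f]) = ([], q) := by
  simp [red, redAux]

lemma exists_source_eq_range_or_pathEnd {v : G.V} {l : List G.E} (hl : G.IsPathFrom v l)
    {e : G.E} (he : e ∈ l) : (∃ f ∈ l, G.s f = G.r e) ∨ G.pathEnd v l = G.r e := by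
  induction l generalizing v with
  | nil => simp at he
  | cons e' t ih =>
    rw [isPathFrom_cons] at hl
    rcases List.mem_cons.mp he with rfl | het
    · cases t with
      | nil => simp
      | cons f t' => exact Or.inl ⟨f, by simp, ((isPathFrom_cons _ _ _).mp hl.2).1⟩
    · rcases ih hl.2 het with ⟨f, hf, hfs⟩ | hend
      · exact Or.inl ⟨f, List.mem_cons_of_mem _ hf, hfs⟩
      · exact Or.inr (by simpa using hend)

lemma IsCycle.exists_source_eq {cv : G.V} {cl : List G.E} (hc : G.IsCycle cv cl) {u : G.V}
    (hu : u ∈ G.pathVerts cv cl) : ∃ f ∈ cl, G.s f = u := by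
  obtain ⟨hne, hpath, hend, -⟩ := hc
  have hcv : ∃ f ∈ cl, G.s f = cv := by
    cases cl with
    | nil => exact absurd rfl hne
    | cons e t => exact ⟨e, List.mem_cons_self, ((isPathFrom_cons _ _ _).mp hpath).1⟩
  rcases hu with rfl | ⟨e, he, rfl⟩
  · exact hcv
  · rcases exists_source_eq_range_or_pathEnd hpath he with hsrc | h
    · exact hsrc
    · rw [← h, hend]; exact hcv

lemma IsCycle.eq_of_source_eq {cv : G.V} {cl : List G.E} (hc : G.IsCycle cv cl) {f g : G.E}
    (hf : f ∈ cl) (hg : g ∈ cl) (hfg : G.s f = G.s g) : f = g :=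
  List.inj_on_of_nodup_map hc.2.2.2 hf hg hfg

lemma range_mem_root_of_mem {cv : G.V} {cl : List G.E} {f : G.E} (hf : f ∈ cl) :
    G.r f ∈ G.root (G.pathVerts cv cl) :=
  subset_root _ (Or.inr ⟨f, hf, rfl⟩)

end DiGraph

open DiGraph

lemma actM_zero (F : List G.E × List G.E → MFree K G) : actM K G F 0 = 0 :=
  Finsupp.sum_zero_index

lemma actM_single_one (F : List G.E × List G.E → MFree K G) (x : List G.E × List G.E) :
    actM K G F (Finsupp.single x 1) = F x := by
  rw [actM, Finsupp.sum_single_index] <;> simp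

variable {K G}

lemma actM_eAct_gAct_cons (v : G.V) (cl : List G.E) {e : G.E} {t q : List G.E}
    (hst : G.startVtx v (t, q) = G.r e) (hred : G.red (e :: t) q = (e :: t, q)) (f : G.E) :
    actM K G (eAct K G v f) (gAct K G v cl f (e :: t, q)) =
      if e = f then Finsupp.single (e :: t, q) 1 else 0 := by
  by_cases hef : e = f
  · subst hef
    simp only [gAct, if_true, actM_single_one, eAct, hst, hred]
  · simp only [gAct, hef, if_false, actM_zero]

lemma actM_eAct_gAct_nil (v : G.V) (cl : List G.E) (q : List G.E) (f : G.E) :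
    actM K G (eAct K G v f) (gAct K G v cl f ([], q)) =
      if f ∈ cl ∧ G.s f = G.pathEnd v q then Finsupp.single ([], q) 1 else 0 := by
  by_cases hf : f ∈ cl ∧ G.s f = G.pathEnd v q
  · have hst : G.startVtx v ([], q ++ [f]) = G.r f := by simp [pathEnd_append]
    simp only [gAct, hf, and_self, if_true, actM_single_one, eAct, hst,
      red_singleton_append_self]
  · simp only [gAct, hf, if_false, actM_zero]

lemma sum_actM_eAct_gAct_cons (v : G.V) (cl : List G.E) {e : G.E} {t q : List G.E}
    (hst : G.startVtx v (t, q) = G.r e) (hred : G.red (e :: t) q = (e :: t, q))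
    (S : Finset G.E) :
    ∑ f ∈ S, actM K G (eAct K G v f) (gAct K G v cl f (e :: t, q)) =
      if e ∈ S then Finsupp.single (e :: t, q) 1 else 0 := by
  simp only [actM_eAct_gAct_cons v cl hst hred, Finset.sum_ite_eq]

lemma sum_actM_eAct_gAct_nil {cv : G.V} {cl : List G.E} (hc : G.IsCycle cv cl) {v w : G.V}
    {q : List G.E} (hq : G.pathEnd v q ∈ G.pathVerts cv cl) {S : Finset G.E}
    (hS : ∀ f ∈ cl, f ∈ S ↔ G.s f = w) :
    ∑ f ∈ S, actM K G (eAct K G v f) (gAct K G v cl f ([], q)) =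
      if G.pathEnd v q = w then Finsupp.single ([], q) 1 else 0 := by
  simp only [actM_eAct_gAct_nil]
  by_cases hqw : G.pathEnd v q = w
  · obtain ⟨f₀, hf₀, hf₀s⟩ := hc.exists_source_eq hq
    rw [if_pos hqw, Finset.sum_eq_single_of_mem f₀ ((hS f₀ hf₀).mpr (hf₀s.trans hqw)),
      if_pos ⟨hf₀, hf₀s⟩]
    rintro f - hne
    rw [if_neg]
    rintro ⟨hf, hfs⟩
    exact hne (hc.eq_of_source_eq hf hf₀ (hfs.trans hf₀s.symm))
  · rw [if_neg hqw]
    refine Finset.sum_eq_zero fun f hfS => if_neg ?_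
    rintro ⟨hf, hfs⟩
    exact hqw (hfs.symm.trans ((hS f hf).mp hfS))

theorem wH_annihilates_general (cv : G.V) (cl : List G.E)
    (hc : G.ExclusiveCycle cv cl) (v : G.V)
    (w : G.V)
    (hfin : {f : G.E | G.s f = w ∧ G.r f ∈ G.root (G.pathVerts cv cl)}.Finite)
    (x : List G.E × List G.E) (hx : x ∈ G.Xset cv cl v) :
    vAct K G v w x =
      ∑ f ∈ hfin.toFinset, actM K G (eAct K G v f) (gAct K G v cl f x) := by
  obtain ⟨⟨hp, -, hend, hcyc⟩, hred⟩ := hx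
  rcases x with ⟨_ | ⟨e, t⟩, q⟩
  · have hS : ∀ f ∈ cl, f ∈ hfin.toFinset ↔ G.s f = w := fun f hf => by
      simp [range_mem_root_of_mem hf]
    rw [sum_actM_eAct_gAct_nil hc.1 hcyc hS]
    simp [vAct]
  · simp only [startVtx_cons, isPathFrom_cons, pathEnd_cons] at hp hend
    have hst : G.startVtx v (t, q) = G.r e := startVtx_eq_of_isPathFrom hp.2 hend
    have hre : G.r e ∈ G.root (G.pathVerts cv cl) :=
      mem_root_of_reach (hend ▸ reach_pathEnd hp.2) (subset_root _ hcyc)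
    rw [sum_actM_eAct_gAct_cons v cl hst hred]
    simp [vAct, hre]

/-- For `H = E⁰ − R(c⁰)`, every `w ∈ B_H` and every basis element `pq* ∈ X` of
`N_c^v`, the element `w^H = w − Σ_{f ∈ s⁻¹(w) ∩ r⁻¹(E⁰−H)} f f*` annihilates `pq*`,
i.e. `w · pq* = Σ_f f · (f* · pq*)`. -/
theorem wH_annihilates (cv : G.V) (cl : List G.E)
    (hc : G.ExclusiveCycle cv cl) (v : G.V) (hv : v ∈ G.pathVerts cv cl)
    (w : G.V) (hw : w ∈ G.root (G.pathVerts cv cl))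
    (hinf : (G.s ⁻¹' {w}).Infinite)
    (hfin : {f : G.E | G.s f = w ∧ G.r f ∈ G.root (G.pathVerts cv cl)}.Finite)
    (hne : {f : G.E | G.s f = w ∧ G.r f ∈ G.root (G.pathVerts cv cl)}.Nonempty)
    (x : List G.E × List G.E) (hx : x ∈ G.Xset cv cl v) :
    vAct K G v w x =
      ∑ f ∈ hfin.toFinset, actM K G (eAct K G v f) (gAct K G v cl f x) :=
  wH_annihilates_general cv cl hc v w hfin x hx

end
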